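/- arXiv:2102.04857 — 5 statements merged into one kernel-verified Lean document; each statement's English description precedes it below -/
import Mathlib

section
/- Let $d$ be a positive integer. If $(x,y)$ is a rational solution of $y^2 = x^3 - d^2 x$ with $x \neq 0$ and $y \neq 0$, then there exist positive integers $k, j, e, m$ with $m > e > 0$, $\gcd(m,e)=1$, $\gcd(k,j)=1$, such that $d = \left(\frac{k}{2j}\right)^2 \cdot \frac{m^2 - e^2}{em}$. -/
/-!
Translating by the 2-torsion point `(0, 0)` maps `(x, y)` to `(-d²/x, d² y/x²)`, so we may assume
`x > 0`, and then `x > d` since `x (x² - d²) = y² > 0`. With `r = x/d > 1` the curve equation reads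
`d r (r² - 1) = (y/d)²`, i.e. `d = q² (r² - 1)/r` with `q = d |y|/(x² - d²)`. Writing `r = m/e` in
lowest terms gives `(r² - 1)/r = (m² - e²)/(e m)`, and any positive rational `q` has the form
`k/(2j)` with `k, j` coprime: take `j = b/2` if the reduced denominator `b` is even, and double
numerator and denominator otherwise.
-/

lemma Rat.exists_coprime_natCast_div {r : ℚ} (hr : 0 ≤ r) :
    ∃ m e : ℕ, 0 < e ∧ m.Coprime e ∧ r = m / e := by
  refine ⟨r.toNNRat.num, r.toNNRat.den, r.toNNRat.den_pos, r.toNNRat.coprime_num_den, ?_⟩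
  rw [← NNRat.cast_natCast, ← NNRat.cast_natCast (n := r.toNNRat.den), ← NNRat.cast_div,
    NNRat.num_div_den, Rat.coe_toNNRat _ hr]

lemma Rat.exists_coprime_natCast_div_two_mul {q : ℚ} (hq : 0 < q) :
    ∃ k j : ℕ, 0 < k ∧ 0 < j ∧ k.Coprime j ∧ q = k / (2 * j) := by
  obtain ⟨a, b, hb, hab, rfl⟩ := Rat.exists_coprime_natCast_div hq.le
  have ha : 0 < a := Nat.pos_of_ne_zero (by rintro rfl; simp at hq)
  rcases Nat.even_or_odd' b with ⟨j, rfl | rfl⟩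
  · exact ⟨a, j, ha, by omega, Nat.Coprime.coprime_mul_left_right hab, by push_cast; rfl⟩
  · refine ⟨2 * a, 2 * j + 1, by omega, by omega,
      Nat.Coprime.mul_left (Nat.coprime_two_left.mpr (odd_two_mul_add_one j)) hab, ?_⟩
    push_cast
    field_simp

lemma exists_repr_of_mul_sq_sub_one_eq_sq {d r w : ℚ} (hd : d ≠ 0) (hr : 1 < r)
    (hw : d * r * (r ^ 2 - 1) = w ^ 2) :
    ∃ k j e m : ℕ, 0 < k ∧ 0 < j ∧ 0 < e ∧ e < m ∧
      Nat.gcd m e = 1 ∧ Nat.gcd k j = 1 ∧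
      d = ((k : ℚ) / (2 * j)) ^ 2 * (((m : ℚ) ^ 2 - (e : ℚ) ^ 2) / (e * m)) := by
  have hr2 : 0 < r ^ 2 - 1 := by nlinarith
  have hw0 : w ≠ 0 := by
    rintro rfl
    exact mul_ne_zero (mul_ne_zero hd (zero_lt_one.trans hr).ne') hr2.ne' (by rw [hw]; ring)
  obtain ⟨m, e, he, hme, rfl⟩ := Rat.exists_coprime_natCast_div (zero_le_one.trans hr.le)
  have he' : (0 : ℚ) < e := by exact_mod_cast he
  have hem : e < m := by
    rw [one_lt_div he'] at hr
    exact_mod_cast hr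
  obtain ⟨k, j, hk, hj, hkj, hq⟩ :=
    Rat.exists_coprime_natCast_div_two_mul (div_pos (abs_pos.mpr hw0) hr2)
  refine ⟨k, j, e, m, hk, hj, he, hem, hme, hkj, ?_⟩
  rw [← hq, div_pow, sq_abs, ← hw]
  have hem' : (e : ℚ) < m := by exact_mod_cast hem
  have hm : (m : ℚ) ≠ 0 := by linarith
  have hme2 : (m : ℚ) ^ 2 - e ^ 2 ≠ 0 := by nlinarith
  field_simp

section CongruentNumberCurve

variable {d x y : ℚ}

lemma lt_of_sq_eq_cube_sub_sq_mul (hd : 0 ≤ d) (hxy : y ^ 2 = x ^ 3 - d ^ 2 * x) (hx : 0 < x)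
    (hy : y ≠ 0) : d < x := by
  have : 0 < x * (x ^ 2 - d ^ 2) := by nlinarith [pow_pos (abs_pos.mpr hy) 2, sq_abs y]
  nlinarith [(pos_iff_pos_of_mul_pos this).mp hx]

lemma ne_zero_of_sq_eq_cube_sub_sq_mul (hxy : y ^ 2 = x ^ 3 - d ^ 2 * x) (hy : y ≠ 0) :
    x ≠ 0 := by
  rintro rfl
  simp_all

lemma sq_eq_cube_sub_sq_mul_add_two_torsion (hxy : y ^ 2 = x ^ 3 - d ^ 2 * x) (hx : x ≠ 0) :
    (d ^ 2 * y / x ^ 2) ^ 2 = (-d ^ 2 / x) ^ 3 - d ^ 2 * (-d ^ 2 / x) := by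
  field_simp
  linear_combination d ^ 4 * hxy

lemma exists_repr_of_sq_eq_cube_sub_sq_mul (hd : 0 < d) (hxy : y ^ 2 = x ^ 3 - d ^ 2 * x)
    (hx : 0 < x) (hy : y ≠ 0) :
    ∃ k j e m : ℕ, 0 < k ∧ 0 < j ∧ 0 < e ∧ e < m ∧
      Nat.gcd m e = 1 ∧ Nat.gcd k j = 1 ∧
      d = ((k : ℚ) / (2 * j)) ^ 2 * (((m : ℚ) ^ 2 - (e : ℚ) ^ 2) / (e * m)) := by
  have hdx := lt_of_sq_eq_cube_sub_sq_mul hd.le hxy hx hy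
  refine exists_repr_of_mul_sq_sub_one_eq_sq (r := x / d) (w := y / d) hd.ne' ?_ ?_
  · rwa [one_lt_div hd]
  · field_simp
    linear_combination -hxy

end CongruentNumberCurve

theorem stmt_1_general (d : ℕ) (hd : 0 < d) (x y : ℚ)
    (hxy : y ^ 2 = x ^ 3 - (d : ℚ) ^ 2 * x) (hy : y ≠ 0) :
    ∃ k j e m : ℕ, 0 < k ∧ 0 < j ∧ 0 < e ∧ e < m ∧
      Nat.gcd m e = 1 ∧ Nat.gcd k j = 1 ∧
      (d : ℚ) = ((k : ℚ) / (2 * j)) ^ 2 * (((m : ℚ) ^ 2 - (e : ℚ) ^ 2) / (e * m)) := by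
  have hd' : (0 : ℚ) < d := by exact_mod_cast hd
  have hx := ne_zero_of_sq_eq_cube_sub_sq_mul hxy hy
  rcases hx.lt_or_gt with hneg | hpos
  · refine exists_repr_of_sq_eq_cube_sub_sq_mul hd'
      (sq_eq_cube_sub_sq_mul_add_two_torsion hxy hx) (div_pos_of_neg_of_neg ?_ hneg) ?_
    · exact neg_neg_of_pos (by positivity)
    · exact div_ne_zero (mul_ne_zero (pow_ne_zero 2 hd'.ne') hy) (pow_ne_zero 2 hx)
  · exact exists_repr_of_sq_eq_cube_sub_sq_mul hd' hxy hpos hy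

theorem stmt_1 (d : ℕ) (hd : 0 < d) (x y : ℚ)
    (hxy : y ^ 2 = x ^ 3 - (d : ℚ) ^ 2 * x) (hx : x ≠ 0) (hy : y ≠ 0) :
    ∃ k j e m : ℕ, 0 < k ∧ 0 < j ∧ 0 < e ∧ e < m ∧
      Nat.gcd m e = 1 ∧ Nat.gcd k j = 1 ∧
      (d : ℚ) = ((k : ℚ) / (2 * j)) ^ 2 * (((m : ℚ) ^ 2 - (e : ℚ) ^ 2) / (e * m)) :=
  stmt_1_general d hd x y hxy hy
end

section
/- Let $d > 3$ be a prime such that $-1$ is a quadratic nonresidue modulo $d$ and $2$ is a quadratic nonresidue modulo $d$. Then there are no positive integers $k, j, m, e$ with $\gcd(m,e) = 1$, $\gcd(k,j) = 1$, $m > e > 0$ satisfying $4 j^2 e m \, d = k^2 (m^2 - e^2)$. -/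
/-!
Since `d · e m (m² - e²) = (2 d j e m / k)²` is a rational square, `e m (m² - e²) = d w²`: the
Pythagorean triangle with legs `m² - e²`, `2em` has area `d w²`, and we descend on `w`.
If `m` and `e` are both odd, the pair `((m + e)/2, (m - e)/2)` gives area `d (w/2)²`. Otherwise
`e, m, m - e, m + e` are pairwise coprime, so the one divisible by `d` is `d` times a square and the
others are squares. If `d` divides `m` or `m + e`, then `-1` is a square mod `d`; if it divides
`m - e`, then `2` is. If `e = d x²`, then writing `m - e = b²`, `m + e = c²`, the legs `(c ± b)/2`
form a primitive Pythagorean triangle of area `d (x/2)²`.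
-/

def IsPythagoreanArea (n : ℕ) : Prop :=
  ∃ m e : ℕ, 0 < e ∧ e < m ∧ Nat.gcd m e = 1 ∧ e * m * (m ^ 2 - e ^ 2) = n

theorem IsPythagoreanArea.pos {n : ℕ} (h : IsPythagoreanArea n) : 0 < n := by
  obtain ⟨m, e, he, hem, -, rfl⟩ := h
  exact Nat.mul_pos (Nat.mul_pos he (he.trans hem))
    (Nat.sub_pos_of_lt (Nat.pow_lt_pow_left hem two_ne_zero))

theorem exists_sq_of_coprime_of_mul_eq_prime_mul_sq {d a b w : ℕ} (hd : d.Prime)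
    (hab : a.Coprime b) (h : a * b = d * w ^ 2) (ha : ¬ d ∣ a) : ∃ x, a = x ^ 2 := by
  obtain ⟨b', rfl⟩ : d ∣ b := (hd.dvd_mul.mp ⟨_, h⟩).resolve_left ha
  have hab' : a.Coprime b' := hab.coprime_mul_left_right
  exact exists_eq_pow_of_mul_eq_pow (Nat.isUnit_iff.mpr hab')
    (Nat.eq_of_mul_eq_mul_left hd.pos (by rw [← h]; ring))

theorem exists_prime_mul_sq_of_coprime_of_mul_eq_prime_mul_sq {d a b w : ℕ} (hd : d.Prime)
    (hab : a.Coprime b) (h : a * b = d * w ^ 2) (ha : d ∣ a) : ∃ x, a = d * x ^ 2 := by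
  obtain ⟨a', rfl⟩ := ha
  obtain ⟨x, rfl⟩ := exists_eq_pow_of_mul_eq_pow (Nat.isUnit_iff.mpr hab.coprime_mul_left)
    (Nat.eq_of_mul_eq_mul_left hd.pos (by rw [← h]; ring))
  exact ⟨x, rfl⟩

theorem isSquare_of_sq_eq_mul_sq {K : Type*} [Field K] {a x y : K} (hy : y ≠ 0)
    (h : x ^ 2 = a * y ^ 2) : IsSquare a := by
  have ha : a = x ^ 2 / y ^ 2 := by field_simp; exact h.symm
  exact ha ▸ (IsSquare.sq x).div (IsSquare.sq y)

theorem isSquare_neg_one_of_sq_add_sq_eq_zero {K : Type*} [Field K] {x y : K} (hx : x ≠ 0)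
    (h : x ^ 2 + y ^ 2 = 0) : IsSquare (-1 : K) :=
  isSquare_of_sq_eq_mul_sq (x := y) hx (by linear_combination h)

theorem isSquare_two_of_sq_add_sq_eq_sq {K : Type*} [Field K] {x y z : K} (hx : x ≠ 0)
    (hxy : y ^ 2 = x ^ 2) (h : x ^ 2 + y ^ 2 = z ^ 2) : IsSquare (2 : K) :=
  isSquare_of_sq_eq_mul_sq (x := z) hx (by linear_combination hxy - h)

theorem odd_of_sq_add_sq_eq_two_mul_sq {b c y : ℕ} (hb : Odd b) (hc : Odd c)
    (h : b ^ 2 + c ^ 2 = 2 * y ^ 2) : Odd y := by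
  obtain ⟨i, rfl⟩ := hb
  obtain ⟨j, rfl⟩ := hc
  rcases Nat.even_or_odd y with ⟨k, rfl⟩ | hy
  · have : (2 * i + 1) ^ 2 + (2 * j + 1) ^ 2 = 4 * (i * i + i + j * j + j) + 2 := by ring
    have : 2 * (k + k) ^ 2 = 4 * (2 * k * k) := by ring
    omega
  · exact hy

theorem isPythagoreanArea_of_int {a : ℕ} (m n : ℤ) (hmn : Int.gcd m n = 1) (hlt : n ^ 2 < m ^ 2)
    (hpos : 0 < m * n) (ha : (a : ℤ) = n * m * (m ^ 2 - n ^ 2)) : IsPythagoreanArea a := by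
  have hlt' : n.natAbs < m.natAbs := by
    zify
    exact sq_lt_sq.mp hlt
  refine ⟨m.natAbs, n.natAbs, Int.natAbs_pos.mpr (right_ne_zero_of_mul hpos.ne'), hlt', hmn, ?_⟩
  have hle : n.natAbs ^ 2 ≤ m.natAbs ^ 2 := Nat.pow_le_pow_left hlt'.le 2
  zify [hle]
  rw [ha, sq_abs, sq_abs, ← abs_mul, mul_comm n m, abs_of_pos hpos]

theorem isPythagoreanArea_of_sq_add_sq {p q y n : ℕ} (hp : 0 < p) (hq : 0 < q)
    (hpq : p.Coprime q) (h : p ^ 2 + q ^ 2 = y ^ 2) (harea : p * q = 2 * n) :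
    IsPythagoreanArea n := by
  have htriple : PythagoreanTriple (p : ℤ) q y := by
    unfold PythagoreanTriple
    exact_mod_cast (by linear_combination h : p * p + q * q = y * y)
  have hp' : (0 : ℤ) < p := by exact_mod_cast hp
  have hq' : (0 : ℤ) < q := by exact_mod_cast hq
  have harea' : (p : ℤ) * q = 2 * n := by exact_mod_cast harea
  obtain ⟨m, k, hlegs, -, hmk, -⟩ := PythagoreanTriple.coprime_classification.mp
    ⟨htriple, by rw [Int.gcd_natCast_natCast]; exact hpq⟩
  rcases hlegs with ⟨hp2, hq2⟩ | ⟨hp2, hq2⟩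
  all_goals
    rw [hp2, hq2] at harea'
    exact isPythagoreanArea_of_int m k hmk (by nlinarith) (by nlinarith) (by linarith)

theorem isPythagoreanArea_of_odd_sq_add_sq {b c y n : ℕ} (hb : Odd b) (hc : Odd c)
    (hbc : b.Coprime c) (hsum : b ^ 2 + c ^ 2 = 2 * y ^ 2) (hdiff : c ^ 2 = b ^ 2 + 8 * n)
    (hn : 0 < n) : IsPythagoreanArea n := by
  have hlt : b < c := by
    by_contra! hle
    have := Nat.pow_le_pow_left hle 2
    omega
  obtain ⟨q, rfl⟩ : ∃ q, c = b + 2 * q := by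
    obtain ⟨i, rfl⟩ := hb
    obtain ⟨j, rfl⟩ := hc
    exact ⟨j - i, by omega⟩
  have hcop : (q + b).Coprime q :=
    Nat.coprime_self_add_left.mpr (Nat.coprime_self_add_right.mp hbc).coprime_mul_left_right
  refine isPythagoreanArea_of_sq_add_sq (y := y) (by omega) (by omega) hcop ?_ ?_
  · have : b ^ 2 + (b + 2 * q) ^ 2 = 2 * ((q + b) ^ 2 + q ^ 2) := by ring
    omega
  · have : (b + 2 * q) ^ 2 = b ^ 2 + 4 * ((q + b) * q) := by ring
    omega

theorem exists_isPythagoreanArea_of_odd {m e : ℕ} (hm : Odd m) (he : Odd e) (hem : e < m)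
    (hcop : Nat.gcd m e = 1) : ∃ n, e * m * (m ^ 2 - e ^ 2) = 4 * n ∧ IsPythagoreanArea n := by
  obtain ⟨s, rfl⟩ : ∃ s, m = e + 2 * s := by
    obtain ⟨i, rfl⟩ := hm
    obtain ⟨j, rfl⟩ := he
    exact ⟨i - j, by omega⟩
  have hcop' : (e + s).Coprime s :=
    Nat.coprime_add_self_left.mpr (Nat.coprime_self_add_left.mp hcop).coprime_mul_left.symm
  refine ⟨s * (e + s) * ((e + s) ^ 2 - s ^ 2), ?_, e + s, s, by omega, by simp [he.pos], hcop', rfl⟩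
  rw [Nat.sub_eq_of_eq_add (by ring : (e + 2 * s) ^ 2 = 4 * s * (e + s) + e ^ 2),
    Nat.sub_eq_of_eq_add (by ring : (e + s) ^ 2 = e * (e + 2 * s) + s ^ 2)]
  ring

theorem odd_of_not_isSquare_neg_one {d : ℕ} (hd : d.Prime) (h1 : ¬ IsSquare (-1 : ZMod d)) :
    Odd d := by
  rcases hd.eq_two_or_odd' with rfl | hodd
  · exact absurd ⟨1, rfl⟩ h1
  · exact hodd

theorem Nat.Prime.not_dvd_of_coprime_of_dvd {d f g k : ℕ} (hd : d.Prime) (hfg : f.Coprime g)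
    (hf : d ∣ f) (hk : k ∣ g) : ¬ d ∣ k := fun hdk =>
  hd.one_lt.ne' (Nat.eq_one_of_dvd_coprimes hfg hf (hdk.trans hk))

theorem coprime_sub_add_of_odd_add {m e : ℕ} (hem : e ≤ m) (hcop : Nat.gcd m e = 1)
    (hpar : Odd (m + e)) : (m - e).Coprime (m + e) := by
  have hodd : Odd (m - e) := by
    obtain ⟨k, hk⟩ := hpar
    exact ⟨k - e, by omega⟩
  rw [show m + e = m - e + 2 * e by omega, Nat.coprime_self_add_right, Nat.coprime_mul_iff_right]
  exact ⟨Nat.coprime_two_right.mpr hodd, (Nat.coprime_sub_self_left hem).mpr hcop⟩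

theorem exists_isPythagoreanArea_of_eq_prime_mul_sq {d m e x y b c : ℕ} (hd : Odd d)
    (he : 0 < e) (hem : e < m) (hpar : Odd (m + e)) (hbc : b.Coprime c) (hx : e = d * x ^ 2)
    (hy : m = y ^ 2) (hb : m - e = b ^ 2) (hc : m + e = c ^ 2) :
    ∃ x', x = 2 * x' ∧ IsPythagoreanArea (d * x' ^ 2) := by
  obtain ⟨k, hk⟩ := hpar
  have hbo : Odd b := (Nat.odd_pow_iff two_ne_zero).mp ⟨k - e, by omega⟩
  have hco : Odd c := (Nat.odd_pow_iff two_ne_zero).mp ⟨k, by omega⟩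
  have hsum : b ^ 2 + c ^ 2 = 2 * y ^ 2 := by omega
  have hmo : Odd m := hy ▸ (odd_of_sq_add_sq_eq_two_mul_sq hbo hco hsum).pow
  have hxe : Even x := by
    have hee : Even (d * x ^ 2) := by
      obtain ⟨j, hj⟩ := hmo
      exact hx ▸ ⟨k - j, by omega⟩
    exact (Nat.even_pow.mp ((Nat.even_mul.mp hee).resolve_left (Nat.not_even_iff_odd.mpr hd))).1
  obtain ⟨x', rfl⟩ := hxe
  have hx' : e = 4 * (d * x' ^ 2) := by rw [hx]; ring
  exact ⟨x', (two_mul x').symm, isPythagoreanArea_of_odd_sq_add_sq hbo hco hbc hsum (by omega)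
    (by omega)⟩

theorem coprime_mul_of_opposite_parity {m e : ℕ} (hem : e < m) (hcop : Nat.gcd m e = 1)
    (hpar : Odd (m + e)) :
    e.Coprime (m * (m - e) * (m + e)) ∧ m.Coprime (e * (m - e) * (m + e)) ∧
      (m - e).Coprime (e * m * (m + e)) ∧ (m + e).Coprime (e * m * (m - e)) := by
  have hem' : e.Coprime m := Nat.coprime_comm.mp hcop
  have hes : e.Coprime (m - e) := (Nat.coprime_sub_self_right hem.le).mpr hem'
  have hea : e.Coprime (m + e) := Nat.coprime_add_self_right.mpr hem'
  have hms : m.Coprime (m - e) := (Nat.coprime_self_sub_right hem.le).mpr hcop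
  have hma : m.Coprime (m + e) := Nat.coprime_self_add_right.mpr hcop
  have hsa : (m - e).Coprime (m + e) := coprime_sub_add_of_odd_add hem.le hcop hpar
  exact ⟨(hem'.mul_right hes).mul_right hea, (hem'.symm.mul_right hms).mul_right hma,
    (hes.symm.mul_right hms.symm).mul_right hsa, (hea.symm.mul_right hma.symm).mul_right hsa.symm⟩

theorem exists_lt_of_opposite_parity_of_dvd {d m e w : ℕ} (hd : d.Prime) (hodd : Odd d)
    (he : 0 < e) (hem : e < m) (hcop : Nat.gcd m e = 1) (hpar : Odd (m + e))
    (h : e * m * (m ^ 2 - e ^ 2) = d * w ^ 2) (hde : d ∣ e) :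
    ∃ w' < w, IsPythagoreanArea (d * w' ^ 2) := by
  obtain ⟨hE, hM, hS, hA⟩ := coprime_mul_of_opposite_parity hem hcop hpar
  have hprod : e * m * (m - e) * (m + e) = d * w ^ 2 := by rw [← h, Nat.sq_sub_sq]; ring
  have not_dvd {f : ℕ} (hf : f ∣ m * (m - e) * (m + e)) : ¬ d ∣ f :=
    hd.not_dvd_of_coprime_of_dvd hE hde hf
  have he_prod : e * (m * (m - e) * (m + e)) = d * w ^ 2 := by rw [← hprod]; ring
  obtain ⟨x, hx⟩ := exists_prime_mul_sq_of_coprime_of_mul_eq_prime_mul_sq hd hE he_prod hde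
  obtain ⟨y, hy⟩ := exists_sq_of_coprime_of_mul_eq_prime_mul_sq hd hM
    (by rw [← hprod]; ring) (not_dvd ((dvd_mul_right _ _).mul_right _))
  obtain ⟨b, hb⟩ := exists_sq_of_coprime_of_mul_eq_prime_mul_sq hd hS
    (by rw [← hprod]; ring) (not_dvd ((dvd_mul_left _ _).mul_right _))
  obtain ⟨c, hc⟩ := exists_sq_of_coprime_of_mul_eq_prime_mul_sq hd hA
    (by rw [← hprod]; ring) (not_dvd (dvd_mul_left _ _))
  have hbc : b.Coprime c := by
    have := hS.coprime_mul_left_right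
    rw [hb, hc] at this
    exact (this.coprime_dvd_left (dvd_pow_self b two_ne_zero)).coprime_dvd_right
      (dvd_pow_self c two_ne_zero)
  obtain ⟨x', rfl, hx'⟩ :=
    exists_isPythagoreanArea_of_eq_prime_mul_sq hodd he hem hpar hbc hx hy hb hc
  refine ⟨x', ?_, hx'⟩
  have hle : e ≤ d * w ^ 2 :=
    Nat.le_of_dvd (IsPythagoreanArea.pos ⟨m, e, he, hem, hcop, h⟩) ⟨_, he_prod.symm⟩
  have hx4 : e = 4 * (d * x' ^ 2) := by rw [hx]; ring
  by_contra! hwx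
  have := Nat.mul_le_mul_left d (Nat.pow_le_pow_left hwx 2)
  omega

theorem isSquare_neg_one_or_two_of_opposite_parity {d m e w : ℕ} (hd : d.Prime) (hem : e < m)
    (hcop : Nat.gcd m e = 1) (hpar : Odd (m + e)) (h : e * m * (m ^ 2 - e ^ 2) = d * w ^ 2)
    (hde : ¬ d ∣ e) : IsSquare (-1 : ZMod d) ∨ IsSquare (2 : ZMod d) := by
  have := Fact.mk hd
  obtain ⟨hE, hM, hS, hA⟩ := coprime_mul_of_opposite_parity hem hcop hpar
  have hprod : e * m * (m - e) * (m + e) = d * w ^ 2 := by rw [← h, Nat.sq_sub_sq]; ring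
  have he_prod : e * (m * (m - e) * (m + e)) = d * w ^ 2 := by rw [← hprod]; ring
  obtain ⟨x, rfl⟩ := exists_sq_of_coprime_of_mul_eq_prime_mul_sq hd hE he_prod hde
  have hx : (x : ZMod d) ≠ 0 := by
    rw [Ne, ZMod.natCast_eq_zero_iff]
    exact fun hdx => hde (dvd_pow hdx two_ne_zero)
  have cast_eq_zero {a : ℕ} : d ∣ a → (a : ZMod d) = 0 := (ZMod.natCast_eq_zero_iff a d).mpr
  have hdvd : d ∣ m * (m - x ^ 2) * (m + x ^ 2) :=
    (hd.dvd_mul.mp ⟨_, he_prod⟩).resolve_left hde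
  rcases hd.dvd_mul.mp hdvd with hdvd | hda
  rcases hd.dvd_mul.mp hdvd with hdm | hds
  · obtain ⟨b, hb⟩ := exists_sq_of_coprime_of_mul_eq_prime_mul_sq hd hS (by rw [← hprod]; ring)
      (hd.not_dvd_of_coprime_of_dvd hM hdm ((dvd_mul_left _ _).mul_right _))
    refine .inl (isSquare_neg_one_of_sq_add_sq_eq_zero hx (y := (b : ZMod d)) ?_)
    have hm := cast_eq_zero hdm
    rw [show m = x ^ 2 + b ^ 2 by omega] at hm
    exact_mod_cast hm
  · obtain ⟨y, rfl⟩ := exists_sq_of_coprime_of_mul_eq_prime_mul_sq hd hM (by rw [← hprod]; ring)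
      (hd.not_dvd_of_coprime_of_dvd hS hds ((dvd_mul_left _ _).mul_right _))
    obtain ⟨c, hc⟩ := exists_sq_of_coprime_of_mul_eq_prime_mul_sq hd hA (by rw [← hprod]; ring)
      (hd.not_dvd_of_coprime_of_dvd hS hds (dvd_mul_left _ _))
    have hs := cast_eq_zero hds
    rw [Nat.cast_sub hem.le] at hs
    have hc' : ((x ^ 2 + y ^ 2 : ℕ) : ZMod d) = (c ^ 2 : ℕ) := by rw [← hc, add_comm]
    push_cast at hs hc'
    exact .inr (isSquare_two_of_sq_add_sq_eq_sq hx (by linear_combination hs) hc')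
  · obtain ⟨y, rfl⟩ := exists_sq_of_coprime_of_mul_eq_prime_mul_sq hd hM (by rw [← hprod]; ring)
      (hd.not_dvd_of_coprime_of_dvd hA hda ((dvd_mul_left _ _).mul_right _))
    refine .inl (isSquare_neg_one_of_sq_add_sq_eq_zero hx (y := (y : ZMod d)) ?_)
    have ha := cast_eq_zero hda
    push_cast at ha
    linear_combination ha

theorem exists_lt_of_even_add {d m e w : ℕ} (hodd : Odd d) (he : 0 < e) (hem : e < m)
    (hcop : Nat.gcd m e = 1) (hpar : Even (m + e)) (h : e * m * (m ^ 2 - e ^ 2) = d * w ^ 2) :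
    ∃ w' < w, IsPythagoreanArea (d * w' ^ 2) := by
  have hmo : Odd m := by
    by_contra hm
    have h2m : 2 ∣ m := (Nat.not_odd_iff_even.mp hm).two_dvd
    have h2e : 2 ∣ e := ((Nat.even_add.mp hpar).mp (Nat.not_odd_iff_even.mp hm)).two_dvd
    simpa [hcop] using Nat.dvd_gcd h2m h2e
  have heo : Odd e := by
    obtain ⟨i, hi⟩ := hmo
    obtain ⟨k, hk⟩ := hpar
    exact ⟨k - i - 1, by omega⟩
  obtain ⟨n, hn, hA⟩ := exists_isPythagoreanArea_of_odd hmo heo hem hcop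
  have hwe : Even w := by
    have : Even (d * w ^ 2) := h ▸ hn ▸ ⟨2 * n, by ring⟩
    exact (Nat.even_pow.mp ((Nat.even_mul.mp this).resolve_left (Nat.not_even_iff_odd.mpr hodd))).1
  obtain ⟨w', rfl⟩ := hwe
  have hn' : n = d * w' ^ 2 := by
    have : 4 * n = 4 * (d * w' ^ 2) := by rw [← hn, h]; ring
    omega
  have hw' : w' ≠ 0 := by
    rintro rfl
    simpa [hn'] using hA.pos
  exact ⟨w', by omega, hn' ▸ hA⟩

theorem IsPythagoreanArea.exists_lt_of_prime_mul_sq {d w : ℕ} (hd : d.Prime)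
    (h1 : ¬ IsSquare (-1 : ZMod d)) (h2 : ¬ IsSquare (2 : ZMod d))
    (h : IsPythagoreanArea (d * w ^ 2)) : ∃ w' < w, IsPythagoreanArea (d * w' ^ 2) := by
  obtain ⟨m, e, he, hem, hcop, harea⟩ := h
  have hodd := odd_of_not_isSquare_neg_one hd h1
  rcases Nat.even_or_odd (m + e) with hpar | hpar
  · exact exists_lt_of_even_add hodd he hem hcop hpar harea
  by_cases hde : d ∣ e
  · exact exists_lt_of_opposite_parity_of_dvd hd hodd he hem hcop hpar harea hde
  · exact (isSquare_neg_one_or_two_of_opposite_parity hd hem hcop hpar harea hde).elim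
      (absurd · h1) (absurd · h2)

theorem not_isPythagoreanArea_prime_mul_sq {d : ℕ} (hd : d.Prime)
    (h1 : ¬ IsSquare (-1 : ZMod d)) (h2 : ¬ IsSquare (2 : ZMod d)) (w : ℕ) :
    ¬ IsPythagoreanArea (d * w ^ 2) := by
  induction w using Nat.strong_induction_on with
  | _ w ih =>
    intro h
    obtain ⟨w', hlt, h'⟩ := h.exists_lt_of_prime_mul_sq hd h1 h2
    exact ih w' hlt h'

theorem exists_eq_prime_mul_sq_of_sq_mul_eq {d k a W : ℕ} (hd : d.Prime) (hk : k ≠ 0)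
    (h : k ^ 2 * a = d * W ^ 2) : ∃ w, a = d * w ^ 2 := by
  obtain ⟨s, hs⟩ : IsSquare (d * a) := by
    rw [← Rat.isSquare_natCast_iff]
    refine ⟨d * W / k, ?_⟩
    have hk' : (k : ℚ) ≠ 0 := by exact_mod_cast hk
    have h' : (k : ℚ) ^ 2 * a = d * W ^ 2 := by exact_mod_cast h
    field_simp
    push_cast
    linear_combination d * h'
  obtain ⟨t, rfl⟩ : d ∣ s := hd.dvd_of_dvd_pow (n := 2) ⟨a, by rw [sq, ← hs]⟩
  exact ⟨t, Nat.eq_of_mul_eq_mul_left hd.pos (by rw [hs]; ring)⟩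

theorem stmt_3_general (d : ℕ) (hd : d.Prime)
    (h1 : ¬ IsSquare (-1 : ZMod d)) (h2 : ¬ IsSquare (2 : ZMod d)) :
    ¬ ∃ k j m e : ℕ, 0 < k ∧ 0 < j ∧ 0 < e ∧ e < m ∧
      Nat.gcd m e = 1 ∧ Nat.gcd k j = 1 ∧
      4 * j ^ 2 * e * m * d = k ^ 2 * (m ^ 2 - e ^ 2) := by
  rintro ⟨k, j, m, e, hk, -, he, hem, hcop, -, heq⟩
  have hscaled : k ^ 2 * (e * m * (m ^ 2 - e ^ 2)) = d * (2 * j * e * m) ^ 2 :=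
    calc k ^ 2 * (e * m * (m ^ 2 - e ^ 2)) = e * m * (k ^ 2 * (m ^ 2 - e ^ 2)) := by ring
      _ = d * (2 * j * e * m) ^ 2 := by rw [← heq]; ring
  obtain ⟨w, hw⟩ := exists_eq_prime_mul_sq_of_sq_mul_eq hd hk.ne' hscaled
  exact not_isPythagoreanArea_prime_mul_sq hd h1 h2 w ⟨m, e, he, hem, hcop, hw⟩

theorem stmt_3 (d : ℕ) (hd : d.Prime) (hd3 : 3 < d)
    (h1 : ¬ IsSquare (-1 : ZMod d)) (h2 : ¬ IsSquare (2 : ZMod d)) :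
    ¬ ∃ k j m e : ℕ, 0 < k ∧ 0 < j ∧ 0 < e ∧ e < m ∧
      Nat.gcd m e = 1 ∧ Nat.gcd k j = 1 ∧
      4 * j ^ 2 * e * m * d = k ^ 2 * (m ^ 2 - e ^ 2) :=
  stmt_3_general d hd h1 h2
end

section
/- Let $d > 3$ be a prime with $-1$ a quadratic nonresidue and $2$ a quadratic nonresidue modulo $d$. Then the elliptic curve $y^2 = x^3 - d^2 x$ has no rational points $(x,y)$ with $y \neq 0$; equivalently, $d$ is not a congruent number. -/
def IsCongruentNumber (n : ℕ) : Prop :=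
  ∃ a b c : ℚ, 0 < a ∧ 0 < b ∧ 0 < c ∧ a ^ 2 + b ^ 2 = c ^ 2 ∧ a * b = 2 * n

/-!
Clearing denominators and dividing by the gcd (possible because `2d` is squarefree) turns a
rational right triangle of area `d` into a primitive integer one with legs `m² - n²`, `2mn` and
area `dW²`. Then `mn(m - n)(m + n) = dW²` with pairwise coprime factors, so three of them are
squares and the fourth is `d` times a square. If `d ∣ m` or `d ∣ m + n` this makes `-1` a square
mod `d`, and if `d ∣ m - n` it makes `2` one. If `d ∣ n`, write `m = α²`, `m ± n = δ², γ²`: then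
`(δ ± γ) / 2` are the legs of another such triangle, with hypotenuse `α < m² + n²`, so infinite
descent rules out this case as well.
-/

theorem Int.exists_pos_sq_of_isCoprime {a b c : ℤ} (hab : IsCoprime a b) (ha : 0 < a)
    (h : a * b = c ^ 2) : ∃ r, 0 < r ∧ a = r ^ 2 := by
  obtain ⟨r, hr | hr⟩ := Int.sq_of_isCoprime hab h
  · refine ⟨|r|, abs_pos.mpr ?_, by rw [sq_abs, hr]⟩
    rintro rfl
    simp [hr] at ha
  · nlinarith [sq_nonneg r]

theorem Int.exists_sq_of_isCoprime_of_prime_dvd {p : ℕ} (hp : p.Prime) {a b c : ℤ}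
    (hpa : (p : ℤ) ∣ a) (hab : IsCoprime a b) (ha : 0 < a) (hb : 0 < b)
    (h : a * b = p * c ^ 2) : ∃ r s, 0 < r ∧ 0 < s ∧ a = p * r ^ 2 ∧ b = s ^ 2 := by
  have hp0 : (0 : ℤ) < p := by exact_mod_cast hp.pos
  obtain ⟨a', rfl⟩ := hpa
  have hab' : IsCoprime a' b := hab.of_isCoprime_of_dvd_left (dvd_mul_left a' p)
  have h' : a' * b = c ^ 2 := mul_left_cancel₀ hp0.ne' (by linear_combination h)
  obtain ⟨r, hr, rfl⟩ := exists_pos_sq_of_isCoprime hab' (pos_of_mul_pos_right ha hp0.le) h'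
  obtain ⟨s, hs, rfl⟩ := exists_pos_sq_of_isCoprime (c := c) hab'.symm hb (by linear_combination h')
  exact ⟨r, s, hr, hs, rfl, rfl⟩

theorem Int.exists_sq_of_isCoprime_of_mul_eq_prime_mul_sq {p : ℕ} (hp : p.Prime) {a b c : ℤ}
    (hab : IsCoprime a b) (ha : 0 < a) (hb : 0 < b) (h : a * b = p * c ^ 2) :
    (∃ r s, 0 < r ∧ 0 < s ∧ a = p * r ^ 2 ∧ b = s ^ 2) ∨
      ∃ r s, 0 < r ∧ 0 < s ∧ a = r ^ 2 ∧ b = p * s ^ 2 := by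
  rcases (Nat.prime_iff_prime_int.mp hp).dvd_or_dvd ⟨c ^ 2, h⟩ with hpa | hpb
  · exact .inl (exists_sq_of_isCoprime_of_prime_dvd hp hpa hab ha hb h)
  · obtain ⟨s, r, hs, hr, hb', ha'⟩ :=
      exists_sq_of_isCoprime_of_prime_dvd (c := c) hp hpb hab.symm hb ha (by linear_combination h)
    exact .inr ⟨r, s, hr, hs, ha', hb'⟩

theorem Int.dvd_of_sq_dvd_mul_sq {k g w : ℤ} (hk : Squarefree k) (h : g ^ 2 ∣ k * w ^ 2) :
    g ∣ w := by
  rcases Nat.eq_zero_or_pos (g.gcd w) with h0 | h0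
  · rw [Int.gcd_eq_zero_iff] at h0
    rw [h0.2]
    exact dvd_zero g
  obtain ⟨e, g', w', he, hcop, rfl, rfl⟩ := Int.exists_gcd_one' h0
  have he' : ((e : ℤ) ^ 2) ≠ 0 := by positivity
  rw [mul_pow, mul_pow, ← mul_assoc] at h
  have h' : g' ^ 2 ∣ k * w' ^ 2 := (mul_dvd_mul_iff_right he').mp h
  have hg' : g' * g' ∣ k := by
    rw [← sq]
    exact ((Int.isCoprime_iff_gcd_eq_one.mpr hcop).pow).dvd_of_dvd_mul_right h'
  exact mul_dvd_mul_right (hk g' hg').dvd _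

theorem IsCoprime.sub_add_of_odd {m n : ℤ} (h : IsCoprime m n) (hodd : Odd (m + n)) :
    IsCoprime (m - n) (m + n) := by
  obtain ⟨u, v, huv⟩ := h
  obtain ⟨k, hk⟩ := hodd
  exact ⟨-k * (u - v), 1 - k * (u + v), by linear_combination hk - 2 * k * huv⟩

theorem IsCoprime.self_sub {m n : ℤ} (h : IsCoprime m n) : IsCoprime m (m - n) := by
  obtain ⟨u, v, huv⟩ := h
  exact ⟨u + v, -v, by linear_combination huv⟩

theorem IsCoprime.add_self {m n : ℤ} (h : IsCoprime m n) : IsCoprime n (m + n) := by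
  obtain ⟨u, v, huv⟩ := h
  exact ⟨v - u, u, by linear_combination huv⟩

theorem ZMod.isSquare_of_dvd_sq_sub_mul_sq {p : ℕ} [Fact p.Prime] {x y k : ℤ}
    (h : (p : ℤ) ∣ x ^ 2 - k * y ^ 2) (hy : ¬ (p : ℤ) ∣ y ^ 2) : IsSquare (k : ZMod p) := by
  rw [← ZMod.intCast_zmod_eq_zero_iff_dvd] at h hy
  push_cast at h hy
  have hy' : (y : ZMod p) ≠ 0 := fun h0 => hy (by simp [h0])
  exact ⟨x / y, by field_simp; linear_combination -h⟩

theorem Nat.Prime.odd_of_not_isSquare_neg_one {p : ℕ} (hp : p.Prime)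
    (h : ¬ IsSquare (-1 : ZMod p)) : Odd p :=
  hp.eq_two_or_odd'.resolve_left (by rintro rfl; exact h ⟨1, by decide⟩)

structure IsIntCongruentTriangle (d : ℕ) (X Y Z W : ℤ) : Prop where
  X_pos : 0 < X
  Y_pos : 0 < Y
  Z_pos : 0 < Z
  W_pos : 0 < W
  pythagorean : X ^ 2 + Y ^ 2 = Z ^ 2
  area : X * Y = 2 * d * W ^ 2

namespace IsIntCongruentTriangle

variable {d : ℕ} {X Y Z W : ℤ}

theorem swap (h : IsIntCongruentTriangle d X Y Z W) : IsIntCongruentTriangle d Y X Z W :=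
  ⟨h.Y_pos, h.X_pos, h.Z_pos, h.W_pos, by linear_combination h.pythagorean,
    by linear_combination h.area⟩

theorem exists_isCoprime (hd : Squarefree (2 * d : ℤ)) (h : IsIntCongruentTriangle d X Y Z W) :
    ∃ X' Y' Z' W', IsIntCongruentTriangle d X' Y' Z' W' ∧ IsCoprime X' Y' ∧ Z' ≤ Z := by
  obtain ⟨g, X', Y', hg, hcop, rfl, rfl⟩ :=
    Int.exists_gcd_one' (Int.gcd_pos_of_ne_zero_left Y h.X_pos.ne')
  have hg' : (0 : ℤ) < g := by exact_mod_cast hg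
  have hg2 : (g : ℤ) ^ 2 ≠ 0 := by positivity
  obtain ⟨Z', rfl⟩ : (g : ℤ) ∣ Z := (Int.pow_dvd_pow_iff two_ne_zero).mp
    ⟨X' ^ 2 + Y' ^ 2, by linear_combination -h.pythagorean⟩
  obtain ⟨W', rfl⟩ : (g : ℤ) ∣ W :=
    Int.dvd_of_sq_dvd_mul_sq hd ⟨X' * Y', by linear_combination -h.area⟩
  refine ⟨X', Y', Z', W', ⟨pos_of_mul_pos_left h.X_pos hg'.le,
    pos_of_mul_pos_left h.Y_pos hg'.le, pos_of_mul_pos_right h.Z_pos hg'.le,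
    pos_of_mul_pos_right h.W_pos hg'.le, mul_left_cancel₀ hg2 ?_, mul_left_cancel₀ hg2 ?_⟩,
    Int.isCoprime_iff_gcd_eq_one.mpr hcop, ?_⟩
  · linear_combination h.pythagorean
  · linear_combination h.area
  · nlinarith [h.Z_pos]

theorem exists_of_sq_add_sq_of_sq_sub_sq (hd_odd : Odd d) {α β γ δ : ℤ} (hα : 0 < α) (hβ : 0 < β)
    (hγ : 0 ≤ γ) (hγδ : γ < δ) (hsum : δ ^ 2 + γ ^ 2 = 2 * α ^ 2)
    (hdiff : δ ^ 2 - γ ^ 2 = 2 * d * β ^ 2) : ∃ X Y W, IsIntCongruentTriangle d X Y α W := by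
  have hpar : Even (δ + γ) := by
    have : Even (δ ^ 2 + γ ^ 2) := hsum ▸ even_two_mul _
    rw [Int.even_add, Int.even_pow' two_ne_zero, Int.even_pow' two_ne_zero] at this
    exact Int.even_add.mpr this
  obtain ⟨s, hs⟩ : Even (δ - γ) := by simpa [Int.even_sub, Int.even_add] using hpar
  obtain ⟨r, hr⟩ := hpar
  have hβ2 : Even β := by
    have : Even ((d : ℤ) * β ^ 2) := ⟨r * s, by nlinarith⟩
    rw [Int.even_mul, Int.even_pow' two_ne_zero] at this
    exact this.resolve_left (by exact_mod_cast Nat.not_even_iff_odd.mpr hd_odd)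
  obtain ⟨w, rfl⟩ := hβ2
  exact ⟨r, s, w, by omega, by omega, hα, by omega, by nlinarith, by nlinarith⟩

variable [hd : Fact d.Prime]

theorem false_of_sub_mul_add_eq_prime_mul_sq {m n : ℤ} (h1 : ¬ IsSquare (-1 : ZMod d))
    (h2 : ¬ IsSquare (2 : ZMod d)) (hn : 0 < n) (hnm : n < m) (hmn : IsCoprime m n)
    (hodd : Odd (m + n)) {r s : ℤ} (hX : (m - n) * (m + n) = d * r ^ 2) (hY : m * n = s ^ 2) :
    False := by
  have hdZ : Prime (d : ℤ) := Nat.prime_iff_prime_int.mp hd.out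
  have hsub := hmn.self_sub
  have hadd := hmn.add_self
  obtain ⟨a, -, rfl⟩ := Int.exists_pos_sq_of_isCoprime hmn (by omega) hY
  obtain ⟨b, -, rfl⟩ :=
    Int.exists_pos_sq_of_isCoprime (c := s) hmn.symm hn (by linear_combination hY)
  rcases Int.exists_sq_of_isCoprime_of_mul_eq_prime_mul_sq hd.out (hmn.sub_add_of_odd hodd)
    (by omega) (by omega) hX with ⟨γ, δ, -, -, hγ, hδ⟩ | ⟨γ, δ, -, -, hγ, hδ⟩
  · exact h2 <| by
      simpa using ZMod.isSquare_of_dvd_sq_sub_mul_sq (x := δ) (k := 2) ⟨-γ ^ 2, by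
        linear_combination -hδ - hγ⟩ fun hda => hdZ.not_isUnit (hsub.isUnit_of_dvd' hda ⟨γ ^ 2, hγ⟩)
  · exact h1 <| by
      simpa using ZMod.isSquare_of_dvd_sq_sub_mul_sq (x := a) (k := -1) ⟨δ ^ 2, by
        linear_combination hδ⟩ fun hdb => hdZ.not_isUnit (hadd.isUnit_of_dvd' hdb ⟨δ ^ 2, hδ⟩)

theorem exists_of_sub_mul_add_eq_sq {m n : ℤ} (h1 : ¬ IsSquare (-1 : ZMod d)) (hn : 0 < n)
    (hnm : n < m) (hmn : IsCoprime m n) (hodd : Odd (m + n)) {r s : ℤ}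
    (hX : (m - n) * (m + n) = r ^ 2) (hY : m * n = d * s ^ 2) :
    ∃ X Y Z W, IsIntCongruentTriangle d X Y Z W ∧ Z ≤ m := by
  have hdZ : Prime (d : ℤ) := Nat.prime_iff_prime_int.mp hd.out
  have hcop := hmn.sub_add_of_odd hodd
  obtain ⟨γ, hγ, hsub⟩ := Int.exists_pos_sq_of_isCoprime hcop (by omega) hX
  obtain ⟨δ, hδ, hadd⟩ :=
    Int.exists_pos_sq_of_isCoprime (c := r) hcop.symm (by omega) (by linear_combination hX)
  rcases Int.exists_sq_of_isCoprime_of_mul_eq_prime_mul_sq hd.out hmn (by omega) hn hY with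
    ⟨α, β, -, -, hm, -⟩ | ⟨α, β, hα, hβ, hm, hn'⟩
  · exact (h1 <| by
      simpa using ZMod.isSquare_of_dvd_sq_sub_mul_sq (x := δ) (k := -1) ⟨2 * α ^ 2, by
        linear_combination -hadd - hsub + 2 * hm⟩ fun hdγ => hdZ.not_isUnit
          (hmn.self_sub.symm.isUnit_of_dvd' (hsub ▸ hdγ) ⟨α ^ 2, hm⟩)).elim
  · have hγδ : γ < δ := by nlinarith
    obtain ⟨X, Y, W, hT⟩ := exists_of_sq_add_sq_of_sq_sub_sq (hd.out.odd_of_not_isSquare_neg_one h1)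
      hα hβ hγ.le hγδ (by linear_combination -hadd - hsub + 2 * hm)
      (by linear_combination -hadd + hsub + 2 * hn')
    exact ⟨X, Y, α, W, hT, by nlinarith⟩

theorem exists_lt_of_odd (h1 : ¬ IsSquare (-1 : ZMod d)) (h2 : ¬ IsSquare (2 : ZMod d))
    (h : IsIntCongruentTriangle d X Y Z W) (hc : IsCoprime X Y) (hX : Odd X) :
    ∃ X' Y' Z' W', IsIntCongruentTriangle d X' Y' Z' W' ∧ Z' < Z := by
  obtain ⟨m, n, rfl, rfl, rfl, hmn, -, hm⟩ := PythagoreanTriple.coprime_classification'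
    (by unfold PythagoreanTriple; linear_combination h.pythagorean)
    (Int.isCoprime_iff_gcd_eq_one.mp hc) (Int.odd_iff.mp hX) h.Z_pos
  have hmn' : IsCoprime m n := Int.isCoprime_iff_gcd_eq_one.mpr hmn
  have hmn0 : 0 < m * n := by linarith [h.Y_pos]
  have hn : 0 < n := pos_of_mul_pos_right hmn0 hm
  have hnm : n < m := by nlinarith [h.X_pos]
  have hodd : Odd (m + n) := (Int.odd_mul.mp (show Odd ((m - n) * (m + n)) by
    convert hX using 1; ring)).2
  have hc' : IsCoprime ((m - n) * (m + n)) (m * n) :=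
    (hc.of_isCoprime_of_dvd_right (Dvd.intro_left 2 (by ring))).of_isCoprime_of_dvd_left
      (Dvd.intro 1 (by ring))
  have harea : (m - n) * (m + n) * (m * n) = d * W ^ 2 :=
    mul_left_cancel₀ two_ne_zero (by linear_combination h.area)
  rcases Int.exists_sq_of_isCoprime_of_mul_eq_prime_mul_sq hd.out hc'
    (mul_pos (by omega) (by omega)) (by positivity) harea with
    ⟨r, s, -, -, hX', hY'⟩ | ⟨r, s, -, -, hX', hY'⟩
  · exact (false_of_sub_mul_add_eq_prime_mul_sq h1 h2 hn hnm hmn' hodd hX' hY').elim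
  · obtain ⟨X', Y', Z', W', hT, hZ'⟩ := exists_of_sub_mul_add_eq_sq h1 hn hnm hmn' hodd hX' hY'
    exact ⟨X', Y', Z', W', hT, by nlinarith⟩

theorem exists_lt_of_isCoprime (h1 : ¬ IsSquare (-1 : ZMod d)) (h2 : ¬ IsSquare (2 : ZMod d))
    (h : IsIntCongruentTriangle d X Y Z W) (hc : IsCoprime X Y) :
    ∃ X' Y' Z' W', IsIntCongruentTriangle d X' Y' Z' W' ∧ Z' < Z := by
  rcases Int.even_or_odd X with hX | hX
  · have hY : Odd Y := Int.not_even_iff_odd.mp fun hY => by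
      simpa [Int.isUnit_iff] using hc.isUnit_of_dvd' hX.two_dvd hY.two_dvd
    exact h.swap.exists_lt_of_odd h1 h2 hc.symm hY
  · exact h.exists_lt_of_odd h1 h2 hc hX

end IsIntCongruentTriangle

theorem not_isIntCongruentTriangle {d : ℕ} [hd : Fact d.Prime] (h1 : ¬ IsSquare (-1 : ZMod d))
    (h2 : ¬ IsSquare (2 : ZMod d)) {X Y Z W : ℤ} : ¬ IsIntCongruentTriangle d X Y Z W := by
  intro h
  have hsq : Squarefree (2 * d : ℤ) := by
    have hodd := hd.out.odd_of_not_isSquare_neg_one h1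
    rw [show (2 * d : ℤ) = (2 * d : ℕ) by push_cast; rfl, Int.squarefree_natCast]
    exact Nat.squarefree_mul_iff.mpr ⟨Nat.coprime_two_left.mpr hodd, Nat.squarefree_two,
      hd.out.squarefree⟩
  induction hZ : Z.toNat using Nat.strong_induction_on generalizing X Y Z W with
  | _ k ih =>
    have hZpos := h.Z_pos
    obtain ⟨X₁, Y₁, Z₁, W₁, hT₁, hc, hZ₁⟩ := h.exists_isCoprime hsq
    obtain ⟨X₂, Y₂, Z₂, W₂, hT₂, hZ₂⟩ := hT₁.exists_lt_of_isCoprime h1 h2 hc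
    exact ih Z₂.toNat (by omega) hT₂ rfl

theorem IsCongruentNumber.exists_isIntCongruentTriangle {n : ℕ} (h : IsCongruentNumber n) :
    ∃ X Y Z W, IsIntCongruentTriangle n X Y Z W := by
  obtain ⟨a, b, c, ha, hb, hc, hpyth, harea⟩ := h
  set q : ℕ := a.den * b.den * c.den
  have hq : (0 : ℚ) < q := by positivity
  have hint : ∀ r : ℚ, r.den ∣ q → ∃ R : ℤ, (R : ℚ) = r * q := by
    rintro r ⟨k, hk⟩
    exact ⟨r.num * k, by rw [hk]; push_cast; rw [← Rat.mul_den_eq_num]; ring⟩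
  obtain ⟨X, hX⟩ := hint a ⟨b.den * c.den, by ring⟩
  obtain ⟨Y, hY⟩ := hint b ⟨a.den * c.den, by ring⟩
  obtain ⟨Z, hZ⟩ := hint c ⟨a.den * b.den, by ring⟩
  refine ⟨X, Y, Z, q, ⟨?_, ?_, ?_, by positivity, ?_, ?_⟩⟩
  · exact_mod_cast (hX ▸ mul_pos ha hq : (0 : ℚ) < X)
  · exact_mod_cast (hY ▸ mul_pos hb hq : (0 : ℚ) < Y)
  · exact_mod_cast (hZ ▸ mul_pos hc hq : (0 : ℚ) < Z)
  · exact_mod_cast (show (X : ℚ) ^ 2 + Y ^ 2 = Z ^ 2 by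
      rw [hX, hY, hZ]; linear_combination (q : ℚ) ^ 2 * hpyth)
  · exact_mod_cast (show (X : ℚ) * Y = 2 * n * q ^ 2 by
      rw [hX, hY]; linear_combination (q : ℚ) ^ 2 * harea)

theorem isCongruentNumber_of_sq_eq_cube_sub {n : ℕ} (hn : 0 < n) {x y : ℚ}
    (h : y ^ 2 = x ^ 3 - n ^ 2 * x) (hy : y ≠ 0) : IsCongruentNumber n := by
  have hx : x ≠ 0 := by
    rintro rfl
    exact hy (pow_eq_zero_iff two_ne_zero |>.mp (by simpa using h))
  have hxn : x ^ 2 - n ^ 2 ≠ 0 := by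
    intro h0
    exact hy (pow_eq_zero_iff two_ne_zero |>.mp (by linear_combination h + x * h0))
  refine ⟨|(x ^ 2 - n ^ 2) / y|, |2 * n * x / y|, (x ^ 2 + n ^ 2) / |y|,
    abs_pos.mpr (div_ne_zero hxn hy), abs_pos.mpr (div_ne_zero (by positivity) hy),
    div_pos (by positivity) (abs_pos.mpr hy), ?_, ?_⟩
  · rw [sq_abs, sq_abs, div_pow, div_pow, div_pow, sq_abs]
    field_simp
    ring
  · have hprod : (x ^ 2 - n ^ 2) / y * (2 * n * x / y) = 2 * n := by
      field_simp
      linear_combination -h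
    rw [← abs_mul, hprod, abs_of_pos (by positivity)]

theorem stmt_4_general (d : ℕ) (hd : d.Prime)
    (h1 : ¬ IsSquare (-1 : ZMod d)) (h2 : ¬ IsSquare (2 : ZMod d)) :
    (∀ x y : ℚ, y ^ 2 = x ^ 3 - (d : ℚ) ^ 2 * x → y = 0) ∧
      ¬ IsCongruentNumber d := by
  have := Fact.mk hd
  have hcong : ¬ IsCongruentNumber d := fun h => by
    obtain ⟨X, Y, Z, W, hT⟩ := h.exists_isIntCongruentTriangle
    exact not_isIntCongruentTriangle h1 h2 hT
  exact ⟨fun x y h => by_contra fun hy =>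
    hcong (isCongruentNumber_of_sq_eq_cube_sub hd.pos h hy), hcong⟩

theorem stmt_4 (d : ℕ) (hd : d.Prime) (hd3 : 3 < d)
    (h1 : ¬ IsSquare (-1 : ZMod d)) (h2 : ¬ IsSquare (2 : ZMod d)) :
    (∀ x y : ℚ, y ^ 2 = x ^ 3 - (d : ℚ) ^ 2 * x → y = 0) ∧
      ¬ IsCongruentNumber d :=
  stmt_4_general d hd h1 h2
end

section
/- Let $d$ be an odd prime with $2$ a quadratic nonresidue modulo $d$. Suppose $t$ is a positive integer with $d \nmid t$ and suppose there exist positive integers $h', e', m'$ with $d + t^2 = h' e' m'$ and $d - t^2 = \frac{1}{2} h' (m'^2 - e'^2)$. Then a contradiction follows; that is, no such $h', e', m'$ exist. -/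
/-!
Reduce modulo `d`. Then `t² = h'e'm'` and `-2t² = h'(m'² - e'²)`, so `h'` and `e'` are units along with `t`
and `h'((m' + e')² - 2e'²) = 2h'e'm' + h'(m'² - e'²) = 0`. Hence `2 = ((m' + e') / e')²`.
-/

theorem isSquare_two_of_sq_eq_mul_of_neg_two_mul_sq_eq {K : Type*} [Field K] {t h e m : K}
    (ht : t ≠ 0) (hprod : t ^ 2 = h * e * m) (hdiff : -2 * t ^ 2 = h * (m ^ 2 - e ^ 2)) :
    IsSquare (2 : K) := by
  have hhem : h * e * m ≠ 0 := hprod ▸ pow_ne_zero 2 ht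
  have hh : h ≠ 0 := left_ne_zero_of_mul (left_ne_zero_of_mul hhem)
  have he : e ≠ 0 := right_ne_zero_of_mul (left_ne_zero_of_mul hhem)
  have hsq : (m + e) ^ 2 = 2 * e ^ 2 :=
    mul_left_cancel₀ hh (by linear_combination -2 * hprod - hdiff)
  exact ⟨(m + e) / e, by field_simp; linear_combination -hsq⟩

theorem stmt_9_general (d : ℕ) (hd : d.Prime)
    (h2 : ¬ IsSquare (2 : ZMod d)) (t : ℕ) (hdt : ¬ d ∣ t) :
    ¬ ∃ h' e' m' : ℕ, 0 < h' ∧ 0 < e' ∧ 0 < m' ∧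
      (d : ℤ) + (t : ℤ) ^ 2 = (h' : ℤ) * e' * m' ∧
      2 * ((d : ℤ) - (t : ℤ) ^ 2) = (h' : ℤ) * ((m' : ℤ) ^ 2 - (e' : ℤ) ^ 2) := by
  have := Fact.mk hd
  rintro ⟨h', e', m', -, -, -, hsum, hdiff⟩
  refine h2 (isSquare_two_of_sq_eq_mul_of_neg_two_mul_sq_eq (t := (t : ZMod d))
    (h := h') (e := e') (m := m') ?_ ?_ ?_)
  · rwa [Ne, ZMod.natCast_eq_zero_iff]
  · simpa [ZMod.natCast_self] using congrArg (Int.cast : ℤ → ZMod d) hsum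
  · simpa [ZMod.natCast_self] using congrArg (Int.cast : ℤ → ZMod d) hdiff

theorem stmt_9 (d : ℕ) (hd : d.Prime) (hodd : Odd d)
    (h2 : ¬ IsSquare (2 : ZMod d)) (t : ℕ) (ht : 0 < t) (hdt : ¬ d ∣ t) :
    ¬ ∃ h' e' m' : ℕ, 0 < h' ∧ 0 < e' ∧ 0 < m' ∧
      (d : ℤ) + (t : ℤ) ^ 2 = (h' : ℤ) * e' * m' ∧
      2 * ((d : ℤ) - (t : ℤ) ^ 2) = (h' : ℤ) * ((m' : ℤ) ^ 2 - (e' : ℤ) ^ 2) :=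
  stmt_9_general d hd h2 t hdt
end

section
/- There is no positive integer $d$ that is both a perfect square and a congruent number; in particular, the elliptic curve $y^2 = x^3 - x$ has no rational points with $y \neq 0$. -/
theorem Int.exists_pos_sq_of_isCoprime_of_mul_eq_sq {a b c : ℤ} (hab : IsCoprime a b)
    (h : a * b = c ^ 2) (ha : 0 < a) : ∃ a₀, 0 < a₀ ∧ a = a₀ ^ 2 := by
  obtain ⟨a₀, rfl | rfl⟩ := Int.sq_of_isCoprime hab h
  · exact ⟨|a₀|, abs_pos.2 (by rintro rfl; simp at ha), (sq_abs a₀).symm⟩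
  · nlinarith [sq_nonneg a₀]

theorem Int.isCoprime_sub_add {m n : ℤ} (hmn : IsCoprime m n) (hodd : Odd (m - n)) :
    IsCoprime (m - n) (m + n) := by
  have h2m : IsCoprime (m - n) (2 * m) := by
    refine IsCoprime.mul_right (Int.isCoprime_two_right.2 hodd) ?_
    simpa [sub_eq_add_neg, add_comm] using hmn.symm.neg_left.add_mul_left_left 1
  simpa [two_mul, sub_eq_add_neg, add_assoc, add_comm, add_left_comm] using
    h2m.add_mul_left_right (-1)

theorem Int.exists_sq_of_mul_mul_sub_mul_add_eq_sq {m n k : ℤ} (hmn : IsCoprime m n)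
    (hodd : Odd (m - n)) (hn : 0 < n) (hnm : n < m) (h : m * n * (m - n) * (m + n) = k ^ 2) :
    ∃ p q r t : ℤ, 0 < p ∧ 0 < r ∧ 0 < t ∧
      m = p ^ 2 ∧ n = q ^ 2 ∧ m - n = r ^ 2 ∧ m + n = t ^ 2 := by
  have hm_sub : IsCoprime m (m - n) := by
    simpa [sub_eq_add_neg, add_comm] using hmn.neg_right.add_mul_left_right 1
  have hm_add : IsCoprime m (m + n) := by simpa [add_comm] using hmn.add_mul_left_right 1
  have hn_sub : IsCoprime n (m - n) := by
    simpa [sub_eq_add_neg, add_comm] using hmn.symm.add_mul_left_right (-1)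
  have hn_add : IsCoprime n (m + n) := by simpa [add_comm] using hmn.symm.add_mul_left_right 1
  have hsub_add := Int.isCoprime_sub_add hmn hodd
  obtain ⟨p, hp, hmp⟩ := Int.exists_pos_sq_of_isCoprime_of_mul_eq_sq
    (hmn.mul_right (hm_sub.mul_right hm_add)) (by rw [← h]; ring) (hn.trans hnm)
  obtain ⟨q, -, hnq⟩ := Int.exists_pos_sq_of_isCoprime_of_mul_eq_sq
    (hmn.symm.mul_right (hn_sub.mul_right hn_add)) (by rw [← h]; ring) hn
  obtain ⟨r, hr, hr'⟩ := Int.exists_pos_sq_of_isCoprime_of_mul_eq_sq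
    (hm_sub.symm.mul_right (hn_sub.symm.mul_right hsub_add)) (by rw [← h]; ring)
    (sub_pos.2 hnm)
  obtain ⟨t, ht, ht'⟩ := Int.exists_pos_sq_of_isCoprime_of_mul_eq_sq
    (hm_add.symm.mul_right (hn_add.symm.mul_right hsub_add.symm)) (by rw [← h]; ring)
    (by omega)
  exact ⟨p, q, r, t, hp, hr, ht, hmp, hnq, hr', ht'⟩

-- `2 * x * y` is a square exactly when the area `x * y / 2` is a rational square.
def IsPrimitiveSquareAreaTriple (x y z : ℤ) : Prop :=
  0 < x ∧ 0 < y ∧ 0 < z ∧ Int.gcd x y = 1 ∧ x ^ 2 + y ^ 2 = z ^ 2 ∧ IsSquare (2 * x * y)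

namespace IsPrimitiveSquareAreaTriple

theorem pythagoreanTriple {x y z : ℤ} (h : IsPrimitiveSquareAreaTriple x y z) :
    PythagoreanTriple x y z := by
  unfold PythagoreanTriple
  linear_combination h.2.2.2.2.1

theorem symm {x y z : ℤ} (h : IsPrimitiveSquareAreaTriple x y z) :
    IsPrimitiveSquareAreaTriple y x z := by
  obtain ⟨hx, hy, hz, hxy, hpyth, harea⟩ := h
  exact ⟨hy, hx, hz, by rwa [Int.gcd_comm], by linarith, by rwa [mul_right_comm]⟩

theorem exists_lt_of_odd {x y z : ℤ} (h : IsPrimitiveSquareAreaTriple x y z) (hx : x % 2 = 1) :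
    ∃ X Y Z, IsPrimitiveSquareAreaTriple X Y Z ∧ Z < z := by
  have hpyth := h.pythagoreanTriple
  obtain ⟨hx0, hy0, hz0, hxy, -, harea⟩ := h
  obtain ⟨m, n, rfl, rfl, rfl, hmn, hpar, hm⟩ := hpyth.coprime_classification' hxy hx hz0
  have hn : 0 < n := by nlinarith
  have hnm : n < m := by nlinarith
  have hmn' : IsCoprime m n := Int.isCoprime_iff_gcd_eq_one.2 hmn
  have hodd : Odd (m - n) := by rw [Int.odd_iff]; omega
  obtain ⟨k, hk⟩ : IsSquare (m * n * (m - n) * (m + n)) := by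
    obtain ⟨j, hj⟩ := harea
    refine Rat.isSquare_intCast_iff.1 ⟨j / 2, ?_⟩
    have hj' : ((2 * (m ^ 2 - n ^ 2) * (2 * m * n) : ℤ) : ℚ) = j * j := by exact_mod_cast hj
    push_cast at hj' ⊢
    linear_combination hj' / 4
  obtain ⟨p, q, r, t, hp, hr, ht, hmp, hnq, hmr, hmt⟩ :=
    Int.exists_sq_of_mul_mul_sub_mul_add_eq_sq hmn' hodd hn hnm (by rw [hk]; ring)
  have hrt : IsCoprime r t := by
    have := Int.isCoprime_sub_add hmn' hodd
    rwa [hmr, hmt, IsCoprime.pow_iff two_pos two_pos] at this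
  have hodd_add : Odd (m + n) := by rw [Int.odd_iff] at hodd ⊢; omega
  obtain ⟨u, rfl⟩ : Odd t := (Int.odd_pow' two_ne_zero).1 (hmt ▸ hodd_add)
  obtain ⟨v, rfl⟩ : Odd r := (Int.odd_pow' two_ne_zero).1 (hmr ▸ hodd)
  have hvu : v < u := by nlinarith
  -- With `X + Y = t` and `X - Y = r`: `X² + Y² = (t² + r²)/2 = m` and `2XY = (t² - r²)/2 = n`.
  refine ⟨u + v + 1, u - v, p, ⟨by omega, by omega, hp, ?_, ?_, q, ?_⟩, by nlinarith⟩
  · obtain ⟨a, b, hab⟩ := hrt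
    exact Int.isCoprime_iff_gcd_eq_one.1 ⟨a + b, b - a, by linear_combination hab⟩
  · linarith
  · linarith

theorem exists_lt {x y z : ℤ} (h : IsPrimitiveSquareAreaTriple x y z) :
    ∃ X Y Z, IsPrimitiveSquareAreaTriple X Y Z ∧ Z < z := by
  obtain ⟨hx, -⟩ | ⟨-, hy⟩ := (h.pythagoreanTriple.even_odd_of_coprime h.2.2.2.1).symm
  · exact h.exists_lt_of_odd hx
  · exact h.symm.exists_lt_of_odd hy

end IsPrimitiveSquareAreaTriple

theorem not_isPrimitiveSquareAreaTriple (x y z : ℤ) : ¬ IsPrimitiveSquareAreaTriple x y z := by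
  intro h
  induction hn : z.toNat using Nat.strong_induction_on generalizing x y z with
  | _ n ih =>
    obtain ⟨X, Y, Z, hXYZ, hZ⟩ := h.exists_lt
    exact ih Z.toNat (by have := hXYZ.2.2.1; omega) X Y Z hXYZ rfl

theorem Rat.not_isSquare_two_mul_of_sq_add_sq {a b c : ℚ} (ha : 0 < a) (hb : 0 < b)
    (h : a ^ 2 + b ^ 2 = c ^ 2) : ¬ IsSquare (2 * a * b) := by
  rintro ⟨j, hj⟩
  set r := a / b
  have hr : (r.num : ℚ) = a / b * r.den := r.mul_den_eq_num.symm
  have hden : (0 : ℤ) < r.den := Int.natCast_pos.2 r.den_pos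
  obtain ⟨w, hw⟩ : IsSquare (r.num ^ 2 + (r.den : ℤ) ^ 2) := by
    refine Rat.isSquare_intCast_iff.1 ⟨c * r.den / b, ?_⟩
    push_cast
    rw [hr]
    field_simp
    linear_combination h
  obtain ⟨s, hs⟩ : IsSquare (2 * r.num * r.den) := by
    refine Rat.isSquare_intCast_iff.1 ⟨j * r.den / b, ?_⟩
    push_cast
    rw [hr]
    field_simp
    linear_combination hj
  refine not_isPrimitiveSquareAreaTriple r.num r.den |w|
    ⟨Rat.num_pos.2 (div_pos ha hb), hden, ?_, r.reduced, ?_, s, hs⟩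
  · exact abs_pos.2 (by rintro rfl; nlinarith [sq_nonneg r.num])
  · rw [sq_abs, hw, sq]

theorem not_isCongruentNumber_sq (s : ℕ) : ¬ IsCongruentNumber (s ^ 2) := by
  rintro ⟨a, b, c, ha, hb, -, h, harea⟩
  exact Rat.not_isSquare_two_mul_of_sq_add_sq ha hb h
    ⟨2 * s, by rw [mul_assoc, harea]; push_cast; ring⟩

theorem isCongruentNumber_one_of_sq_eq_cube_sub_self {x y : ℚ} (hy : y ≠ 0)
    (h : y ^ 2 = x ^ 3 - x) : IsCongruentNumber 1 := by
  have hx : x ≠ 0 := by rintro rfl; simp at h; exact hy h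
  have hx2 : x ^ 2 - 1 ≠ 0 := fun h0 ↦
    hy (pow_eq_zero_iff two_ne_zero |>.1 (by linear_combination h + x * h0))
  refine ⟨|x ^ 2 - 1| / |y|, |2 * x| / |y|, (x ^ 2 + 1) / |y|, by positivity, by positivity,
    by positivity, ?_, ?_⟩
  · rw [div_pow, div_pow, div_pow, sq_abs, sq_abs, sq_abs, ← add_div]
    congr 1
    ring
  · have hxy : (x ^ 2 - 1) * (2 * x) = 2 * (y * y) := by linear_combination -2 * h
    rw [div_mul_div_comm, ← abs_mul, abs_mul_abs_self, hxy,
      abs_of_nonneg (mul_nonneg zero_le_two (mul_self_nonneg y)), mul_div_assoc,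
      div_self (mul_self_ne_zero.2 hy)]
    norm_num

theorem stmt_14 :
    (¬ ∃ d : ℕ, 0 < d ∧ (∃ s : ℕ, d = s ^ 2) ∧ IsCongruentNumber d) ∧
      (∀ x y : ℚ, y ^ 2 = x ^ 3 - x → y = 0) := by
  refine ⟨fun ⟨d, _, ⟨s, hs⟩, hd⟩ ↦ not_isCongruentNumber_sq s (hs ▸ hd), fun x y h ↦ ?_⟩
  by_contra hy
  exact not_isCongruentNumber_sq 1
    (by simpa using isCongruentNumber_one_of_sq_eq_cube_sub_self hy h)
end
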